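/- arXiv:2510.25484 — 3 statements merged into one kernel-verified Lean document; each statement's English description precedes it below -/
import Mathlib

section
/- Let E : [0,∞) → [0,∞) be a non-increasing function, integrable on [0,∞), and suppose there exists M > 0 such that ∫ₜ^∞ E(s) ds ≤ M·E(t) for every t ∈ [0,∞). Then E(t) ≤ e^{1 − t/M}·E(0) for every t ∈ [M, +∞). -/
open MeasureTheory

/-- Komornik's integral inequality: if a non-increasing nonnegative integrable
function `E` on `[0,∞)` satisfies `∫ₜ^∞ E ≤ M·E(t)` for all `t ≥ 0`, then
`E(t) ≤ e^{1 - t/M}·E(0)` for all `t ≥ M`. -/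
theorem komornik_integral_inequality
    (E : ℝ → ℝ) (M : ℝ) (hM : 0 < M)
    (hE_nonneg : ∀ t, 0 ≤ t → 0 ≤ E t)
    (hE_mono : AntitoneOn E (Set.Ici 0))
    (hE_int : IntegrableOn E (Set.Ici 0))
    (hE_ineq : ∀ t, 0 ≤ t → (∫ s in Set.Ioi t, E s) ≤ M * E t) :
    ∀ t, M ≤ t → E t ≤ Real.exp (1 - t / M) * E 0 := by
  set F : ℝ → ℝ := fun s => ∫ x in Set.Ioi s, E x with hFdef
  have hint : ∀ s : ℝ, 0 ≤ s → IntegrableOn E (Set.Ioi s) := fun s hs =>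
    hE_int.mono_set (Set.Ioi_subset_Ici_self.trans (Set.Ici_subset_Ici.mpr hs))
  have hintIoc : ∀ a b : ℝ, 0 ≤ a → IntegrableOn E (Set.Ioc a b) := fun a b ha =>
    hE_int.mono_set (fun x hx => le_trans ha hx.1.le)
  have hFnonneg : ∀ s : ℝ, 0 ≤ s → 0 ≤ F s := fun s hs =>
    setIntegral_nonneg measurableSet_Ioi (fun x hx => hE_nonneg x (hs.trans (le_of_lt hx)))
  -- decomposition
  have hdecomp : ∀ a b : ℝ, 0 ≤ a → a ≤ b → F a = (∫ x in Set.Ioc a b, E x) + F b := by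
    intro a b ha hab
    rw [hFdef]
    simp only
    rw [← Set.Ioc_union_Ioi_eq_Ioi hab,
      setIntegral_union (Set.Ioc_disjoint_Ioi le_rfl) measurableSet_Ioi
        (hintIoc a b ha) (hint b (ha.trans hab))]
  -- lower bound on piece
  have hpiece : ∀ a b : ℝ, 0 ≤ a → a ≤ b → E b * (b - a) ≤ ∫ x in Set.Ioc a b, E x := by
    intro a b ha hab
    have h := setIntegral_ge_of_const_le_real (c := E b) measurableSet_Ioc
      (by simp [Real.volume_Ioc])
      (fun x hx => hE_mono (Set.mem_Ici.mpr (ha.trans hx.1.le))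
        (Set.mem_Ici.mpr (ha.trans hab)) hx.2)
      (hintIoc a b ha)
    rwa [Real.volume_real_Ioc_of_le hab] at h
  -- step lemma
  have hstep : ∀ a b : ℝ, 0 ≤ a → a ≤ b → F b * (1 + (b - a) / M) ≤ F a := by
    intro a b ha hab
    have h1 := hdecomp a b ha hab
    have h2 := hpiece a b ha hab
    have h3 := hE_ineq b (ha.trans hab)
    have h4 : F b ≤ M * E b := h3
    have h5 : (b - a) / M * F b ≤ (b - a) * E b := by
      rw [div_mul_eq_mul_div, div_le_iff₀ hM]
      nlinarith [sub_nonneg.mpr hab]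
    nlinarith
  -- iteration
  have hiter : ∀ (k : ℕ) (h : ℝ), 0 ≤ h → F (k * h) * (1 + h / M) ^ k ≤ F 0 := by
    intro k
    induction k with
    | zero => intro h hh; simp
    | succ k ih =>
      intro h hh
      have hk : (0:ℝ) ≤ (k : ℝ) * h := mul_nonneg (Nat.cast_nonneg k) hh
      have hs := hstep ((k : ℝ) * h) (((k : ℕ) + 1 : ℕ) * h) hk
        (by push_cast; nlinarith)
      have hs' : F (((k + 1 : ℕ) : ℝ) * h) * (1 + h / M) ≤ F ((k : ℝ) * h) := by
        have := hs
        push_cast at this ⊢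
        have heq : ((k : ℝ) + 1) * h - (k : ℝ) * h = h := by ring
        rw [heq] at this
        exact this
      have hpow : (0:ℝ) ≤ (1 + h / M) ^ k :=
        pow_nonneg (by positivity) k
      calc F (((k + 1 : ℕ) : ℝ) * h) * (1 + h / M) ^ (k + 1)
          = (F (((k + 1 : ℕ) : ℝ) * h) * (1 + h / M)) * (1 + h / M) ^ k := by ring
        _ ≤ F ((k : ℝ) * h) * (1 + h / M) ^ k := mul_le_mul_of_nonneg_right hs' hpow
        _ ≤ F 0 := ih h hh
  -- exponential bound
  have hexp : ∀ s : ℝ, 0 ≤ s → F s * Real.exp (s / M) ≤ F 0 := by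
    intro s hs
    have key : ∀ n : ℕ, F s * (1 + (s / M) / n) ^ n ≤ F 0 := by
      intro n
      rcases Nat.eq_zero_or_pos n with rfl | hn
      · simp only [Nat.cast_zero, div_zero, add_zero, pow_zero, mul_one]
        have h1 := hstep 0 s le_rfl hs
        have h2 := hFnonneg s hs
        simp only [sub_zero] at h1
        nlinarith [mul_nonneg h2 (div_nonneg hs hM.le)]
      · have hne : (n : ℝ) ≠ 0 := Nat.cast_ne_zero.mpr hn.ne'
        have := hiter n (s / n) (div_nonneg hs (Nat.cast_nonneg n))
        have heq1 : (n : ℝ) * (s / n) = s := by field_simp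
        have heq2 : (s / n) / M = (s / M) / n := by ring
        rw [heq1, heq2] at this
        exact this
    have hlim : Filter.Tendsto (fun n : ℕ => F s * (1 + (s / M) / n) ^ n)
        Filter.atTop (nhds (F s * Real.exp (s / M))) :=
      (Real.tendsto_one_add_div_pow_exp (s / M)).const_mul (F s)
    exact le_of_tendsto' hlim key
  -- conclusion
  intro t ht
  have ha : (0:ℝ) ≤ t - M := by linarith
  have ht0 : (0:ℝ) ≤ t := hM.le.trans ht
  -- M * E t ≤ F (t - M)
  have h1 : E t * M ≤ F (t - M) := by
    have hp := hpiece (t - M) t ha (by linarith)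
    have hd := hdecomp (t - M) t ha (by linarith)
    have hFt := hFnonneg t ht0
    have : t - (t - M) = M := by ring
    rw [this] at hp
    linarith
  have h2 := hexp (t - M) ha
  have h3 := hE_ineq 0 le_rfl
  have h4 : F 0 ≤ M * E 0 := h3
  -- combine
  have hexppos := Real.exp_pos ((t - M) / M)
  have h5 : E t * M * Real.exp ((t - M) / M) ≤ M * E 0 := by
    calc E t * M * Real.exp ((t - M) / M)
        ≤ F (t - M) * Real.exp ((t - M) / M) :=
          mul_le_mul_of_nonneg_right h1 hexppos.le
      _ ≤ F 0 := h2
      _ ≤ M * E 0 := h4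
  have h6 : E t * Real.exp ((t - M) / M) ≤ E 0 := by
    nlinarith [hE_nonneg t ht0]
  have heq : 1 - t / M = -((t - M) / M) := by field_simp; ring
  rw [heq, Real.exp_neg]
  calc E t ≤ E 0 / Real.exp ((t - M) / M) := by
        rw [le_div_iff₀ hexppos]; exact h6
    _ = (Real.exp ((t - M) / M))⁻¹ * E 0 := by ring
end

section
/- Let τ > 0, κ₁, κ₂, γ ∈ ℝ with κ₂ ≠ 0, κ₁ > |κ₂|, and |κ₂| ≤ γ ≤ 2κ₁ − |κ₂|; set C := min{ (γ − |κ₂|)/2, κ₁ − (γ + |κ₂|)/2 }. Let σ : [0,1] → ℝ be twice continuously differentiable with σ(0) = 0 and σ ≥ 0, and q : [0,1] → ℝ continuously differentiable with q > 0. Let u : [0,1] × ℝ → ℝ be smooth (all partial derivatives up to the required order continuous) and satisfy: (i) u_tt(x,t) + (σ(x)·u_xx(x,t))_xx − (q(x)·u_x(x,t))_x = 0 for all x ∈ (0,1), t > 0; (ii) u(0,t) = 0 and u_x(0,t) = 0 for all t; (iii) u_xx(1,t) = 0 for all t; (iv) (σ·u_xx)_x(1,t) − q(1)·u_x(1,t)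 = κ₁·u_t(1,t) + κ₂·u_t(1,t − τ) for all t. Define E(t) := (1/2)·( ∫₀¹ ( u_t(x,t)² + σ(x)·u_xx(x,t)² + q(x)·u_x(x,t)² ) dx + γτ·∫₀¹ u_t(1, t − τs)² ds ). Then E is differentiable for t > 0 and E'(t) ≤ −C·( u_t(1,t)² + u_t(1,t − τ)² ) ≤ 0; in particular E is non-increasing. -/
open MeasureTheory

/-- Partial derivative in the space variable of `u : ℝ → ℝ → ℝ`, `u = u(x, t)`. -/
noncomputable def pdx (u : ℝ → ℝ → ℝ) (x t : ℝ) : ℝ := deriv (fun y => u y t) x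

/-- Partial derivative in the time variable of `u : ℝ → ℝ → ℝ`, `u = u(x, t)`. -/
noncomputable def pdt (u : ℝ → ℝ → ℝ) (x t : ℝ) : ℝ := deriv (fun s => u x s) t

/-- The energy of the delayed degenerate beam system:
`E(t) = ½(∫₀¹ (u_t² + σ u_xx² + q u_x²) dx + γτ ∫₀¹ u_t(1, t-τs)² ds)`. -/
noncomputable def beamEnergy (σ q : ℝ → ℝ) (γ τ : ℝ) (u : ℝ → ℝ → ℝ) (t : ℝ) : ℝ :=
  (1 / 2) * ((∫ x in (0:ℝ)..1,
      ((pdt u x t) ^ 2 + σ x * (pdx (pdx u) x t) ^ 2 + q x * (pdx u x t) ^ 2))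
    + γ * τ * ∫ s in (0:ℝ)..1, (pdt u 1 (t - τ * s)) ^ 2)

section Aux
variable {u : ℝ → ℝ → ℝ} {n : ℕ∞}

lemma hasDerivAt_pdt_aux (hu : ContDiff ℝ 1 (Function.uncurry u)) (x t : ℝ) :
    HasDerivAt (fun s => u x s) (fderiv ℝ (Function.uncurry u) (x, t) (0, 1)) t := by
  have h1 : HasFDerivAt (Function.uncurry u) (fderiv ℝ (Function.uncurry u) (x, t)) (x, t) :=
    (hu.differentiable one_ne_zero (x, t)).hasFDerivAt
  have h2 : HasDerivAt (fun s : ℝ => ((x, s) : ℝ × ℝ)) ((0 : ℝ), (1 : ℝ)) t :=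
    (hasDerivAt_const t x).prodMk (hasDerivAt_id t)
  exact h1.comp_hasDerivAt t h2

lemma hasDerivAt_pdx_aux (hu : ContDiff ℝ 1 (Function.uncurry u)) (x t : ℝ) :
    HasDerivAt (fun y => u y t) (fderiv ℝ (Function.uncurry u) (x, t) (1, 0)) x := by
  have h1 : HasFDerivAt (Function.uncurry u) (fderiv ℝ (Function.uncurry u) (x, t)) (x, t) :=
    (hu.differentiable one_ne_zero (x, t)).hasFDerivAt
  have h2 : HasDerivAt (fun y : ℝ => ((y, t) : ℝ × ℝ)) ((1 : ℝ), (0 : ℝ)) x :=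
    (hasDerivAt_id x).prodMk (hasDerivAt_const x t)
  exact h1.comp_hasDerivAt x h2

lemma hasDerivAt_pdt' (hu : ContDiff ℝ 1 (Function.uncurry u)) (x t : ℝ) :
    HasDerivAt (fun s => u x s) (pdt u x t) t :=
  (hasDerivAt_pdt_aux hu x t).differentiableAt.hasDerivAt

lemma hasDerivAt_pdx' (hu : ContDiff ℝ 1 (Function.uncurry u)) (x t : ℝ) :
    HasDerivAt (fun y => u y t) (pdx u x t) x :=
  (hasDerivAt_pdx_aux hu x t).differentiableAt.hasDerivAt

lemma pdt_eq (hu : ContDiff ℝ 1 (Function.uncurry u)) (x t : ℝ) :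
    pdt u x t = fderiv ℝ (Function.uncurry u) (x, t) (0, 1) :=
  (hasDerivAt_pdt_aux hu x t).deriv

lemma pdx_eq (hu : ContDiff ℝ 1 (Function.uncurry u)) (x t : ℝ) :
    pdx u x t = fderiv ℝ (Function.uncurry u) (x, t) (1, 0) :=
  (hasDerivAt_pdx_aux hu x t).deriv

lemma contDiff_uncurry_pdt (hu : ContDiff ℝ (n + 1) (Function.uncurry u)) :
    ContDiff ℝ n (Function.uncurry (pdt u)) := by
  have h : Function.uncurry (pdt u)
      = fun p : ℝ × ℝ => fderiv ℝ (Function.uncurry u) p ((0 : ℝ), (1 : ℝ)) := by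
    funext p
    exact pdt_eq (hu.of_le (by exact_mod_cast le_add_self)) p.1 p.2
  rw [h]
  exact (hu.fderiv_right le_rfl).clm_apply contDiff_const

lemma contDiff_uncurry_pdx (hu : ContDiff ℝ (n + 1) (Function.uncurry u)) :
    ContDiff ℝ n (Function.uncurry (pdx u)) := by
  have h : Function.uncurry (pdx u)
      = fun p : ℝ × ℝ => fderiv ℝ (Function.uncurry u) p ((1 : ℝ), (0 : ℝ)) := by
    funext p
    exact pdx_eq (hu.of_le (by exact_mod_cast le_add_self)) p.1 p.2
  rw [h]
  exact (hu.fderiv_right le_rfl).clm_apply contDiff_const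

lemma pdt_pdx_comm (hu : ContDiff ℝ 2 (Function.uncurry u)) (x t : ℝ) :
    pdt (pdx u) x t = pdx (pdt u) x t := by
  set U := Function.uncurry u with hU
  set f' := fderiv ℝ U with hf'
  have hu1 : ContDiff ℝ 1 U := hu.of_le one_le_two
  have hdiff : ∀ y, HasFDerivAt U (f' y) y := fun y =>
    ((hu.differentiable two_ne_zero) y).hasFDerivAt
  have hf'c : ContDiff ℝ 1 f' := hu.fderiv_right (m := 1) le_rfl
  have hf'd : HasFDerivAt f' (fderiv ℝ f' (x, t)) (x, t) :=
    ((hf'c.differentiable one_ne_zero) (x, t)).hasFDerivAt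
  set f'' := fderiv ℝ f' (x, t) with hf''
  have hsymm := second_derivative_symmetric hdiff hf'd ((1:ℝ), (0:ℝ)) ((0:ℝ), (1:ℝ))
  have h1 : HasDerivAt (fun s => f' (x, s)) (f'' ((0:ℝ), (1:ℝ))) t := by
    have h2 : HasDerivAt (fun s : ℝ => ((x, s) : ℝ × ℝ)) ((0 : ℝ), (1 : ℝ)) t :=
      (hasDerivAt_const t x).prodMk (hasDerivAt_id t)
    exact hf'd.comp_hasDerivAt t h2
  have h3 : HasDerivAt (fun s => pdx u x s) (f'' ((0:ℝ), (1:ℝ)) ((1:ℝ), (0:ℝ))) t := by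
    have := h1.clm_apply (hasDerivAt_const t ((1:ℝ), (0:ℝ)))
    simp only [add_zero, map_zero] at this
    exact this.congr_of_eventuallyEq (Filter.Eventually.of_forall fun s => pdx_eq hu1 x s)
  have h4 : HasDerivAt (fun y => f' (y, t)) (f'' ((1:ℝ), (0:ℝ))) x := by
    have h2 : HasDerivAt (fun y : ℝ => ((y, t) : ℝ × ℝ)) ((1 : ℝ), (0 : ℝ)) x :=
      (hasDerivAt_id x).prodMk (hasDerivAt_const x t)
    exact hf'd.comp_hasDerivAt x h2
  have h5 : HasDerivAt (fun y => pdt u y t) (f'' ((1:ℝ), (0:ℝ)) ((0:ℝ), (1:ℝ))) x := by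
    have := h4.clm_apply (hasDerivAt_const x ((0:ℝ), (1:ℝ)))
    simp only [add_zero, map_zero] at this
    exact this.congr_of_eventuallyEq (Filter.Eventually.of_forall fun y => pdt_eq hu1 y t)
  have e1 : pdt (pdx u) x t = f'' ((0:ℝ), (1:ℝ)) ((1:ℝ), (0:ℝ)) := h3.deriv
  have e2 : pdx (pdt u) x t = f'' ((1:ℝ), (0:ℝ)) ((0:ℝ), (1:ℝ)) := h5.deriv
  rw [e1, e2, hsymm]

lemma delay_rw {g : ℝ → ℝ} {τ : ℝ} (hg : Continuous g) (hτ : 0 < τ) (t : ℝ) :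
    (∫ s in (0:ℝ)..1, g (t - τ * s)) = (1 / τ) * ∫ r in (t - τ)..t, g r := by
  have h : ∀ s ∈ Set.uIcc (0:ℝ) 1, HasDerivAt (fun s => t - τ * s) (-τ) s := by
    intro s _
    simpa using ((hasDerivAt_id s).const_mul τ).const_sub t
  have := intervalIntegral.integral_comp_smul_deriv h (continuousOn_const) hg
  simp only [Function.comp, smul_eq_mul, mul_zero, sub_zero, mul_one] at this
  have h2 : (∫ s in (0:ℝ)..1, -τ * g (t - τ * s)) = -τ * ∫ s in (0:ℝ)..1, g (t - τ * s) := by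
    simp [intervalIntegral.integral_const_mul]
  rw [h2, intervalIntegral.integral_symm (t - τ) t] at this
  field_simp at this ⊢
  linarith

lemma delay_hasDerivAt {g : ℝ → ℝ} {τ : ℝ} (hg : Continuous g) (hτ : 0 < τ) (t : ℝ) :
    HasDerivAt (fun t => ∫ s in (0:ℝ)..1, g (t - τ * s)) ((1 / τ) * (g t - g (t - τ))) t := by
  have key : (fun t => ∫ s in (0:ℝ)..1, g (t - τ * s))
      = fun t => (1 / τ) * ((∫ r in (0:ℝ)..t, g r) - ∫ r in (0:ℝ)..(t - τ), g r) := by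
    funext t
    rw [delay_rw hg hτ t,
      intervalIntegral.integral_interval_sub_left (hg.intervalIntegrable _ _)
        (hg.intervalIntegrable _ _)]
  rw [key]
  have h1 : HasDerivAt (fun t => ∫ r in (0:ℝ)..t, g r) (g t) t :=
    (hg.integral_hasStrictDerivAt 0 t).hasDerivAt
  have h2 : HasDerivAt (fun t => ∫ r in (0:ℝ)..(t - τ), g r) (g (t - τ)) t := by
    have := (hg.integral_hasStrictDerivAt 0 (t - τ)).hasDerivAt
    have hcomp := this.comp t ((hasDerivAt_id t).sub_const τ)
    simpa [Function.comp_def] using hcomp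
  exact ((h1.sub h2).const_mul _)

end Aux

section Main

variable {σ q : ℝ → ℝ} {u : ℝ → ℝ → ℝ}

/-- Differentiation under the integral sign for the main part of the energy. -/
lemma E1_hasDerivAt (hσ : ContDiff ℝ 2 σ) (hq : ContDiff ℝ 1 q)
    (hu : ContDiff ℝ (⊤ : ℕ∞) (Function.uncurry u)) (t₀ : ℝ) :
    HasDerivAt (fun t => ∫ x in (0:ℝ)..1,
        ((pdt u x t) ^ 2 + σ x * (pdx (pdx u) x t) ^ 2 + q x * (pdx u x t) ^ 2))
      (∫ x in (0:ℝ)..1,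
        (2 * pdt u x t₀ * pdt (pdt u) x t₀
          + σ x * (2 * pdx (pdx u) x t₀ * pdt (pdx (pdx u)) x t₀)
          + q x * (2 * pdx u x t₀ * pdt (pdx u) x t₀))) t₀ := by
  -- smoothness of all partial derivatives
  have hca : ((⊤:ℕ∞) : WithTop ℕ∞) + 1 ≤ ((⊤:ℕ∞) : WithTop ℕ∞) := by exact_mod_cast le_top
  have hA : ContDiff ℝ ((⊤:ℕ∞) : WithTop ℕ∞) (Function.uncurry (pdt u)) :=
    contDiff_uncurry_pdt (n := (⊤ : ℕ∞)) (hu.of_le (by simp))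
  have hCx : ContDiff ℝ ((⊤:ℕ∞) : WithTop ℕ∞) (Function.uncurry (pdx u)) :=
    contDiff_uncurry_pdx (n := (⊤ : ℕ∞)) (hu.of_le (by simp))
  have hB : ContDiff ℝ ((⊤:ℕ∞) : WithTop ℕ∞) (Function.uncurry (pdx (pdx u))) :=
    contDiff_uncurry_pdx (n := (⊤ : ℕ∞)) (hCx.of_le hca)
  have hAt : ContDiff ℝ ((⊤:ℕ∞) : WithTop ℕ∞) (Function.uncurry (pdt (pdt u))) :=
    contDiff_uncurry_pdt (n := (⊤ : ℕ∞)) (hA.of_le hca)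
  have hBt : ContDiff ℝ ((⊤:ℕ∞) : WithTop ℕ∞) (Function.uncurry (pdt (pdx (pdx u)))) :=
    contDiff_uncurry_pdt (n := (⊤ : ℕ∞)) (hB.of_le hca)
  have hCt : ContDiff ℝ ((⊤:ℕ∞) : WithTop ℕ∞) (Function.uncurry (pdt (pdx u))) :=
    contDiff_uncurry_pdt (n := (⊤ : ℕ∞)) (hCx.of_le hca)
  have hc1 : (1 : WithTop ℕ∞) ≤ ((⊤:ℕ∞) : WithTop ℕ∞) := by exact_mod_cast le_top
  set F : ℝ → ℝ → ℝ := fun t x =>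
    (pdt u x t) ^ 2 + σ x * (pdx (pdx u) x t) ^ 2 + q x * (pdx u x t) ^ 2 with hF
  set F' : ℝ → ℝ → ℝ := fun t x =>
    2 * pdt u x t * pdt (pdt u) x t
      + σ x * (2 * pdx (pdx u) x t * pdt (pdx (pdx u)) x t)
      + q x * (2 * pdx u x t * pdt (pdx u) x t) with hF'
  -- joint continuity
  have swapc : Continuous fun p : ℝ × ℝ => (p.2, p.1) := continuous_swap
  have cA : Continuous fun p : ℝ × ℝ => pdt u p.2 p.1 := hA.continuous.comp swapc
  have cB : Continuous fun p : ℝ × ℝ => pdx (pdx u) p.2 p.1 := hB.continuous.comp swapc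
  have cC : Continuous fun p : ℝ × ℝ => pdx u p.2 p.1 := hCx.continuous.comp swapc
  have cAt : Continuous fun p : ℝ × ℝ => pdt (pdt u) p.2 p.1 := hAt.continuous.comp swapc
  have cBt : Continuous fun p : ℝ × ℝ => pdt (pdx (pdx u)) p.2 p.1 := hBt.continuous.comp swapc
  have cCt : Continuous fun p : ℝ × ℝ => pdt (pdx u) p.2 p.1 := hCt.continuous.comp swapc
  have cσ : Continuous fun p : ℝ × ℝ => σ p.2 := hσ.continuous.comp continuous_snd
  have cq : Continuous fun p : ℝ × ℝ => q p.2 := hq.continuous.comp continuous_snd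
  have cF : Continuous fun p : ℝ × ℝ => F p.1 p.2 := by
    apply Continuous.add
    apply Continuous.add
    · exact cA.pow 2
    · exact cσ.mul (cB.pow 2)
    · exact cq.mul (cC.pow 2)
  have cF' : Continuous fun p : ℝ × ℝ => F' p.1 p.2 := by
    apply Continuous.add
    apply Continuous.add
    · exact (continuous_const.mul cA).mul cAt
    · exact cσ.mul ((continuous_const.mul cB).mul cBt)
    · exact cq.mul ((continuous_const.mul cC).mul cCt)
  -- bound on a compact neighborhood
  obtain ⟨M, hM⟩ := (((isCompact_closedBall t₀ 1).prod (isCompact_uIcc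
      (a := (0:ℝ)) (b := (1:ℝ))))).exists_bound_of_continuousOn
      (cF'.continuousOn)
  have h_diff : ∀ᵐ x ∂(volume : Measure ℝ), x ∈ Set.uIoc (0:ℝ) 1 →
      ∀ t ∈ Metric.ball t₀ 1, HasDerivAt (fun t => F t x) (F' t x) t := by
    refine Filter.Eventually.of_forall fun x _ t _ => ?_
    have d1 : HasDerivAt (fun s => pdt u x s) (pdt (pdt u) x t) t :=
      hasDerivAt_pdt' (hA.of_le hc1) x t
    have d2 : HasDerivAt (fun s => pdx (pdx u) x s) (pdt (pdx (pdx u)) x t) t :=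
      hasDerivAt_pdt' (hB.of_le hc1) x t
    have d3 : HasDerivAt (fun s => pdx u x s) (pdt (pdx u) x t) t :=
      hasDerivAt_pdt' (hCx.of_le hc1) x t
    have e1 := d1.pow 2
    have e2 := (d2.pow 2).const_mul (σ x)
    have e3 := (d3.pow 2).const_mul (q x)
    have := (e1.add e2).add e3
    convert this using 1
    · rfl
    · rfl
    · rfl
    simp only [hF']
    ring
  refine (intervalIntegral.hasDerivAt_integral_of_dominated_loc_of_deriv_le
    (F := F) (F' := F') (bound := fun _ => M) (Metric.ball_mem_nhds t₀ one_pos) ?_ ?_ ?_ ?_ ?_ h_diff).2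
  · exact Filter.Eventually.of_forall fun t =>
      ((cF.comp (Continuous.prodMk_right t)).aestronglyMeasurable)
  · exact (cF.comp (Continuous.prodMk_right t₀)).intervalIntegrable _ _
  · exact ((cF'.comp (Continuous.prodMk_right t₀)).aestronglyMeasurable)
  · refine Filter.Eventually.of_forall fun x hx t ht => ?_
    exact hM (t, x) ⟨Metric.ball_subset_closedBall ht, Set.uIoc_subset_uIcc hx⟩
  · exact intervalIntegrable_const

lemma integral_Fprime (hσ : ContDiff ℝ 2 σ) (hq : ContDiff ℝ 1 q)
    (hu : ContDiff ℝ (⊤ : ℕ∞) (Function.uncurry u)) (hσ0 : σ 0 = 0)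
    (τ κ₁ κ₂ t : ℝ)
    (hpdet : ∀ x ∈ Set.Ioo (0:ℝ) 1,
      pdt (pdt u) x t
        + pdx (pdx (fun y s => σ y * pdx (pdx u) y s)) x t
        - pdx (fun y s => q y * pdx u y s) x t = 0)
    (hbc₀ : ∀ s : ℝ, u 0 s = 0)
    (hbc₂t : pdx (pdx u) 1 t = 0)
    (hbc₃t : pdx (fun y s => σ y * pdx (pdx u) y s) 1 t - q 1 * pdx u 1 t
      = κ₁ * pdt u 1 t + κ₂ * pdt u 1 (t - τ)) :
    (∫ x in (0:ℝ)..1,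
        (2 * pdt u x t * pdt (pdt u) x t
          + σ x * (2 * pdx (pdx u) x t * pdt (pdx (pdx u)) x t)
          + q x * (2 * pdx u x t * pdt (pdx u) x t)))
      = -2 * pdt u 1 t * (κ₁ * pdt u 1 t + κ₂ * pdt u 1 (t - τ)) := by
  have hca : ((⊤:ℕ∞) : WithTop ℕ∞) + 1 ≤ ((⊤:ℕ∞) : WithTop ℕ∞) := by exact_mod_cast le_top
  have hc1 : (1 : WithTop ℕ∞) ≤ ((⊤:ℕ∞) : WithTop ℕ∞) := by exact_mod_cast le_top
  have hc2 : (2 : WithTop ℕ∞) ≤ ((⊤:ℕ∞) : WithTop ℕ∞) := by norm_cast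
  have hA : ContDiff ℝ ((⊤:ℕ∞) : WithTop ℕ∞) (Function.uncurry (pdt u)) :=
    contDiff_uncurry_pdt (n := (⊤ : ℕ∞)) (hu.of_le (by simp))
  have hCx : ContDiff ℝ ((⊤:ℕ∞) : WithTop ℕ∞) (Function.uncurry (pdx u)) :=
    contDiff_uncurry_pdx (n := (⊤ : ℕ∞)) (hu.of_le (by simp))
  have hB : ContDiff ℝ ((⊤:ℕ∞) : WithTop ℕ∞) (Function.uncurry (pdx (pdx u))) :=
    contDiff_uncurry_pdx (n := (⊤ : ℕ∞)) (hCx.of_le hca)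
  have hCt : ContDiff ℝ ((⊤:ℕ∞) : WithTop ℕ∞) (Function.uncurry (pdt (pdx u))) :=
    contDiff_uncurry_pdt (n := (⊤ : ℕ∞)) (hCx.of_le hca)
  have hBt : ContDiff ℝ ((⊤:ℕ∞) : WithTop ℕ∞) (Function.uncurry (pdt (pdx (pdx u)))) :=
    contDiff_uncurry_pdt (n := (⊤ : ℕ∞)) (hB.of_le hca)
  set sb : ℝ → ℝ → ℝ := fun y s => σ y * pdx (pdx u) y s with hsb_def
  set qc : ℝ → ℝ → ℝ := fun y s => q y * pdx u y s with hqc_def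
  have hsb : ContDiff ℝ 2 (Function.uncurry sb) := by
    exact (hσ.comp contDiff_fst).mul (hB.of_le hc2)
  have hqc : ContDiff ℝ 1 (Function.uncurry qc) := by
    exact (hq.comp contDiff_fst).mul (hCx.of_le hc1)
  have hsbx : ContDiff ℝ 1 (Function.uncurry (pdx sb)) := by
    have := contDiff_uncurry_pdx (n := 1) (u := sb) (by exact_mod_cast hsb)
    exact_mod_cast this
  -- the antiderivative
  set P : ℝ → ℝ := fun x =>
    pdt u x t * qc x t - pdt u x t * pdx sb x t + pdt (pdx u) x t * sb x t with hP_def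
  set Pd : ℝ → ℝ := fun x =>
    (pdt (pdx u) x t * qc x t + pdt u x t * pdx qc x t)
      - (pdt (pdx u) x t * pdx sb x t + pdt u x t * pdx (pdx sb) x t)
      + (pdt (pdx (pdx u)) x t * sb x t + pdt (pdx u) x t * pdx sb x t) with hPd_def
  have dP : ∀ x : ℝ, HasDerivAt P (Pd x) x := by
    intro x
    have d1 : HasDerivAt (fun y => pdt u y t) (pdt (pdx u) x t) x := by
      have h := hasDerivAt_pdx' (hA.of_le hc1) x t
      rwa [← pdt_pdx_comm (hu.of_le hc2) x t] at h
    have d2 : HasDerivAt (fun y => qc y t) (pdx qc x t) x := hasDerivAt_pdx' hqc x t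
    have d3 : HasDerivAt (fun y => pdx sb y t) (pdx (pdx sb) x t) x := hasDerivAt_pdx' hsbx x t
    have d4 : HasDerivAt (fun y => pdt (pdx u) y t) (pdt (pdx (pdx u)) x t) x := by
      have h := hasDerivAt_pdx' (hCt.of_le hc1) x t
      rwa [← pdt_pdx_comm (hCx.of_le hc2) x t] at h
    have d5 : HasDerivAt (fun y => sb y t) (pdx sb x t) x :=
      hasDerivAt_pdx' (hsb.of_le (by exact_mod_cast one_le_two)) x t
    exact ((d1.mul d2).sub (d1.mul d3)).add (d4.mul d5)
  -- continuity of Pd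
  have cfix : ∀ {w : ℝ → ℝ → ℝ}, Continuous (Function.uncurry w) →
      Continuous fun x => w x t := fun hw =>
    hw.comp (continuous_id.prodMk continuous_const)
  have cPd : Continuous Pd := by
    have c1 := cfix hCt.continuous
    have c2 := cfix hqc.continuous
    have c3 := cfix hA.continuous
    have c4 := cfix (contDiff_uncurry_pdx (n := 0) (u := qc) (by exact_mod_cast hqc)).continuous
    have c5 := cfix hsbx.continuous
    have c6 := cfix (contDiff_uncurry_pdx (n := 0) (u := pdx sb) (by exact_mod_cast hsbx)).continuous
    have c7 := cfix hBt.continuous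
    have c8 := cfix (hsb.continuous)
    exact (((c1.mul c2).add (c3.mul c4)).sub ((c1.mul c5).add (c3.mul c6))).add
      ((c7.mul c8).add (c1.mul c5))
  have hftc : (∫ x in (0:ℝ)..1, Pd x) = P 1 - P 0 :=
    intervalIntegral.integral_eq_sub_of_hasDerivAt (fun x _ => dP x)
      (cPd.intervalIntegrable _ _)
  -- a.e. identification of the integrand with 2 * Pd
  have hae : ∀ᵐ x ∂(volume : Measure ℝ), x ∈ Set.uIoc (0:ℝ) 1 →
      (2 * pdt u x t * pdt (pdt u) x t
        + σ x * (2 * pdx (pdx u) x t * pdt (pdx (pdx u)) x t)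
        + q x * (2 * pdx u x t * pdt (pdx u) x t)) = 2 * Pd x := by
    have hne : ∀ᵐ x ∂(volume : Measure ℝ), x ≠ 1 := by
      rw [MeasureTheory.ae_iff]
      simpa using Real.volume_singleton
    filter_upwards [hne] with x hx hmem
    rw [Set.uIoc_of_le (by norm_num : (0:ℝ) ≤ 1)] at hmem
    have hx1 : x ∈ Set.Ioo (0:ℝ) 1 := ⟨hmem.1, lt_of_le_of_ne hmem.2 hx⟩
    have hp := hpdet x hx1
    simp only [hPd_def, hsb_def, hqc_def]
    linear_combination (2 * pdt u x t) * hp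
  rw [intervalIntegral.integral_congr_ae hae, intervalIntegral.integral_const_mul, hftc]
  -- boundary values
  have ha0 : pdt u 0 t = 0 := by
    have h0 : (fun s => u 0 s) = fun _ => (0:ℝ) := funext hbc₀
    simp [pdt, h0]
  have hP0 : P 0 = 0 := by
    simp [hP_def, hsb_def, ha0, hσ0]
  have hP1 : P 1 = -(pdt u 1 t * (κ₁ * pdt u 1 t + κ₂ * pdt u 1 (t - τ))) := by
    simp only [hP_def, hsb_def, hqc_def, hbc₂t, mul_zero, add_zero]
    linear_combination (-(pdt u 1 t)) * hbc₃t
  rw [hP0, hP1]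
  ring

end Main

/-- Dissipation law for the energy of the degenerate Euler–Bernoulli beam with axial
force and delayed boundary feedback: `E' (t) ≤ -C(u_t(1,t)² + u_t(1,t-τ)²) ≤ 0` for
`t > 0`, and `E` is non-increasing. -/
theorem energy_dissipation
    (τ κ₁ κ₂ γ : ℝ) (hτ : 0 < τ) (hκ₂ : κ₂ ≠ 0) (hκ : |κ₂| < κ₁)
    (hγ₁ : |κ₂| ≤ γ) (hγ₂ : γ ≤ 2 * κ₁ - |κ₂|)
    (C : ℝ) (hC : C = min ((γ - |κ₂|) / 2) (κ₁ - (γ + |κ₂|) / 2))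
    (σ : ℝ → ℝ) (hσ_smooth : ContDiff ℝ 2 σ) (hσ0 : σ 0 = 0)
    (hσ_nonneg : ∀ x ∈ Set.Icc (0:ℝ) 1, 0 ≤ σ x)
    (q : ℝ → ℝ) (hq_smooth : ContDiff ℝ 1 q) (hq_pos : ∀ x ∈ Set.Icc (0:ℝ) 1, 0 < q x)
    (u : ℝ → ℝ → ℝ) (hu_smooth : ContDiff ℝ (⊤ : ℕ∞) (Function.uncurry u))
    (hpde : ∀ x ∈ Set.Ioo (0:ℝ) 1, ∀ t, 0 < t →
      pdt (pdt u) x t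
        + pdx (pdx (fun y s => σ y * pdx (pdx u) y s)) x t
        - pdx (fun y s => q y * pdx u y s) x t = 0)
    (hbc₀ : ∀ t : ℝ, u 0 t = 0)
    (hbc₁ : ∀ t : ℝ, pdx u 0 t = 0)
    (hbc₂ : ∀ t : ℝ, pdx (pdx u) 1 t = 0)
    (hbc₃ : ∀ t : ℝ, pdx (fun y s => σ y * pdx (pdx u) y s) 1 t - q 1 * pdx u 1 t
      = κ₁ * pdt u 1 t + κ₂ * pdt u 1 (t - τ))
    (E : ℝ → ℝ) (hE : E = beamEnergy σ q γ τ u) :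
    (∀ t, 0 < t → DifferentiableAt ℝ E t ∧
        deriv E t ≤ -C * ((pdt u 1 t) ^ 2 + (pdt u 1 (t - τ)) ^ 2) ∧
        -C * ((pdt u 1 t) ^ 2 + (pdt u 1 (t - τ)) ^ 2) ≤ 0) ∧
      AntitoneOn E (Set.Ici 0) := by
  have hA : ContDiff ℝ ((⊤:ℕ∞) : WithTop ℕ∞) (Function.uncurry (pdt u)) :=
    contDiff_uncurry_pdt (n := (⊤ : ℕ∞)) (hu_smooth.of_le (by simp))
  have hg : Continuous fun r => (pdt u 1 r) ^ 2 :=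
    (hA.continuous.comp (continuous_const.prodMk continuous_id)).pow 2
  -- E is differentiable everywhere with this derivative
  have hEd : ∀ t : ℝ, HasDerivAt E ((1 / 2) * ((∫ x in (0:ℝ)..1,
        (2 * pdt u x t * pdt (pdt u) x t
          + σ x * (2 * pdx (pdx u) x t * pdt (pdx (pdx u)) x t)
          + q x * (2 * pdx u x t * pdt (pdx u) x t)))
      + γ * τ * ((1 / τ) * ((pdt u 1 t) ^ 2 - (pdt u 1 (t - τ)) ^ 2)))) t := by
    intro t
    have h1 := E1_hasDerivAt hσ_smooth hq_smooth hu_smooth t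
    have h2 := delay_hasDerivAt (g := fun r => (pdt u 1 r) ^ 2) hg hτ t
    have h3 := (h1.add (h2.const_mul (γ * τ))).const_mul (1/2 : ℝ)
    rw [hE]
    exact h3
  have hC0 : 0 ≤ C := by
    rw [hC]
    exact le_min (by linarith) (by linarith)
  have key : ∀ t : ℝ, 0 < t →
      deriv E t ≤ -C * ((pdt u 1 t) ^ 2 + (pdt u 1 (t - τ)) ^ 2) := by
    intro t ht
    have hint := integral_Fprime hσ_smooth hq_smooth hu_smooth hσ0 τ κ₁ κ₂ t
      (fun x hx => hpde x hx t ht) hbc₀ (hbc₂ t) (hbc₃ t)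
    rw [(hEd t).deriv, hint]
    set A1 := pdt u 1 t with hA1
    set A2 := pdt u 1 (t - τ) with hA2
    have hττ : τ * (1 / τ) = 1 := by field_simp
    have hz : |A1 * A2| ≤ (A1 ^ 2 + A2 ^ 2) / 2 := by
      rw [abs_mul]
      nlinarith [sq_nonneg (|A1| - |A2|), sq_abs A1, sq_abs A2, abs_nonneg A1, abs_nonneg A2]
    have hcross : -(κ₂ * (A1 * A2)) ≤ |κ₂| * ((A1 ^ 2 + A2 ^ 2) / 2) := by
      calc -(κ₂ * (A1 * A2)) ≤ |κ₂ * (A1 * A2)| := neg_le_abs _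
        _ = |κ₂| * |A1 * A2| := abs_mul _ _
        _ ≤ |κ₂| * ((A1 ^ 2 + A2 ^ 2) / 2) :=
            mul_le_mul_of_nonneg_left hz (abs_nonneg κ₂)
    have e1 : 0 ≤ ((γ - |κ₂|) / 2 - C) * A2 ^ 2 :=
      mul_nonneg (by rw [hC]; have := min_le_left ((γ - |κ₂|) / 2) (κ₁ - (γ + |κ₂|) / 2); linarith)
        (sq_nonneg _)
    have e2 : 0 ≤ (κ₁ - (γ + |κ₂|) / 2 - C) * A1 ^ 2 :=
      mul_nonneg (by rw [hC]; have := min_le_right ((γ - |κ₂|) / 2) (κ₁ - (γ + |κ₂|) / 2); linarith)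
        (sq_nonneg _)
    have hexp : (1 / 2 : ℝ) * (-2 * A1 * (κ₁ * A1 + κ₂ * A2)
        + γ * τ * (1 / τ * (A1 ^ 2 - A2 ^ 2)))
        = -(κ₁ * A1 ^ 2) - κ₂ * (A1 * A2) + (γ * (τ * (1/τ))) * (A1 ^ 2 - A2 ^ 2) / 2 := by
      ring
    rw [hexp, hττ]
    nlinarith [hcross, e1, e2]
  have nonpos : ∀ t : ℝ, -C * ((pdt u 1 t) ^ 2 + (pdt u 1 (t - τ)) ^ 2) ≤ 0 := by
    intro t
    have : 0 ≤ C * ((pdt u 1 t) ^ 2 + (pdt u 1 (t - τ)) ^ 2) :=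
      mul_nonneg hC0 (by positivity)
    linarith
  refine ⟨fun t ht => ⟨(hEd t).differentiableAt, key t ht, nonpos t⟩, ?_⟩
  have hdiff : Differentiable ℝ E := fun t => (hEd t).differentiableAt
  refine antitoneOn_of_deriv_nonpos (convex_Ici 0) hdiff.continuous.continuousOn
    (hdiff.differentiableOn) ?_
  intro x hx
  rw [interior_Ici] at hx
  exact le_trans (key x hx) (nonpos x)
end

section
/- Let τ > 0, κ₁, κ₂, γ ∈ ℝ with κ₂ ≠ 0, κ₁ > |κ₂|, |κ₂| ≤ γ ≤ 2κ₁ − |κ₂|. Let q : [0,1] → ℝ be continuously differentiable with 0 < q₀ ≤ q(x) ≤ q₁ and |q'(x)| ≤ q₂ on [0,1]; let σ : [0,1] → ℝ be twice continuously differentiable with σ(0) = 0, σ(x) > 0 on (0,1], and x·|σ'(x)| ≤ ι_σ·σ(x) on (0,1] for some ι_σ ≥ 0; assume ι := max{ι_σ, q₂/q₀} < 2. Let u : [0,1] × ℝ → ℝ be a smooth solution of u_tt + (σ u_xx)_xx − (q u_x)_x = 0 on (0,1) × (0,∞) with u(0,t) = 0, u_x(0,t) = 0, u_xx(1,t) =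 0, and (σ u_xx)_x(1,t) − q(1) u_x(1,t) = κ₁ u_t(1,t) + κ₂ u_t(1,t−τ) for all t. Define E(t) := (1/2)·( ∫₀¹ ( u_t² + σ u_xx² + q u_x² ) dx + γτ ∫₀¹ u_t(1,t−τs)² ds ) and G(t) := ∫₀¹ u_t(x,t)·( 2x·u_x(x,t) + (ι/2)·u(x,t) ) dx + γτ·∫₀¹ e^{−2τs}·u_t(1,t−τs)² ds. Then for all t > 0: G'(t) ≤ −min{ 2 − ι, 4e^{−2τ} }·E(t) + (q(1)/2)·u_x(1,t)² + (q(1)/4)·ι²·u(1,t)² + ( 1 + γ + (2/q(1))·κ₁² )·u_t(1,t)² + ( (2/q(1))·κ₂² − γ·e^{−2τ} )·u_t(1,t−τ)². -/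
open MeasureTheory

/-- The auxiliary functional of the Lyapunov function:
`G(t) = ∫₀¹ u_t(x,t)(2x u_x(x,t) + (ι/2) u(x,t)) dx + γτ ∫₀¹ e^{-2τs} u_t(1,t-τs)² ds`. -/
noncomputable def beamG (ι γ τ : ℝ) (u : ℝ → ℝ → ℝ) (t : ℝ) : ℝ :=
  (∫ x in (0:ℝ)..1, pdt u x t * (2 * x * pdx u x t + (ι / 2) * u x t))
    + γ * τ * ∫ s in (0:ℝ)..1, Real.exp (-2 * τ * s) * (pdt u 1 (t - τ * s)) ^ 2

open Function Set intervalIntegral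

set_option maxHeartbeats 1000000

namespace BeamAux

lemma contDiff_slice_t {v : ℝ → ℝ → ℝ} {n : WithTop ℕ∞} (h : ContDiff ℝ n (uncurry v)) (x : ℝ) :
    ContDiff ℝ n (fun s => v x s) := h.comp (contDiff_const.prodMk contDiff_id)

lemma contDiff_slice_x {v : ℝ → ℝ → ℝ} {n : WithTop ℕ∞} (h : ContDiff ℝ n (uncurry v)) (t : ℝ) :
    ContDiff ℝ n (fun y => v y t) := h.comp (contDiff_id.prodMk contDiff_const)

lemma hasDerivAt_slice_x {v : ℝ → ℝ → ℝ} (h : Differentiable ℝ (uncurry v)) (x t : ℝ) :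
    HasDerivAt (fun y => v y t) (fderiv ℝ (uncurry v) (x, t) (1, 0)) x := by
  have h1 : HasDerivAt (fun y : ℝ => (y, t)) ((1:ℝ), (0:ℝ)) x :=
    (hasDerivAt_id x).prodMk (hasDerivAt_const x t)
  exact ((h (x, t)).hasFDerivAt).comp_hasDerivAt x h1

lemma hasDerivAt_slice_t {v : ℝ → ℝ → ℝ} (h : Differentiable ℝ (uncurry v)) (x t : ℝ) :
    HasDerivAt (fun s => v x s) (fderiv ℝ (uncurry v) (x, t) (0, 1)) t := by
  have h1 : HasDerivAt (fun s : ℝ => (x, s)) ((0:ℝ), (1:ℝ)) t :=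
    (hasDerivAt_const t x).prodMk (hasDerivAt_id t)
  exact ((h (x, t)).hasFDerivAt).comp_hasDerivAt t h1

lemma pdx_eq {v : ℝ → ℝ → ℝ} (h : Differentiable ℝ (uncurry v)) (x t : ℝ) :
    pdx v x t = fderiv ℝ (uncurry v) (x, t) (1, 0) := (hasDerivAt_slice_x h x t).deriv

lemma pdt_eq {v : ℝ → ℝ → ℝ} (h : Differentiable ℝ (uncurry v)) (x t : ℝ) :
    pdt v x t = fderiv ℝ (uncurry v) (x, t) (0, 1) := (hasDerivAt_slice_t h x t).deriv

lemma contDiff_pdx {v : ℝ → ℝ → ℝ} (h : ContDiff ℝ (⊤ : ℕ∞) (uncurry v)) :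
    ContDiff ℝ (⊤ : ℕ∞) (uncurry (pdx v)) := by
  have he : uncurry (pdx v) = fun p : ℝ × ℝ => fderiv ℝ (uncurry v) p (1, 0) := by
    funext p
    exact pdx_eq (h.differentiable (by simp)) p.1 p.2
  rw [he]
  exact (h.fderiv_right (by simp)).clm_apply contDiff_const

lemma contDiff_pdt {v : ℝ → ℝ → ℝ} (h : ContDiff ℝ (⊤ : ℕ∞) (uncurry v)) :
    ContDiff ℝ (⊤ : ℕ∞) (uncurry (pdt v)) := by
  have he : uncurry (pdt v) = fun p : ℝ × ℝ => fderiv ℝ (uncurry v) p (0, 1) := by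
    funext p
    exact pdt_eq (h.differentiable (by simp)) p.1 p.2
  rw [he]
  exact (h.fderiv_right (by simp)).clm_apply contDiff_const

lemma clairaut {v : ℝ → ℝ → ℝ} (h : ContDiff ℝ (⊤ : ℕ∞) (uncurry v)) (x t : ℝ) :
    pdt (pdx v) x t = pdx (pdt v) x t := by
  set F := uncurry v with hF
  have hdF : Differentiable ℝ F := h.differentiable (by simp)
  have hD : ContDiff ℝ (⊤ : ℕ∞) (fderiv ℝ F) := h.fderiv_right (by simp)
  have hdD : DifferentiableAt ℝ (fderiv ℝ F) (x, t) := (hD.differentiable (by simp)) (x, t)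
  have hsymm : ∀ v' w' : ℝ × ℝ,
      (fderiv ℝ (fderiv ℝ F) (x, t) v') w' = (fderiv ℝ (fderiv ℝ F) (x, t) w') v' := by
    intro v' w'
    exact second_derivative_symmetric (fun y => (hdF y).hasFDerivAt) hdD.hasFDerivAt v' w'
  have e1 : pdt (pdx v) x t = (fderiv ℝ (fderiv ℝ F) (x, t) (0, 1)) (1, 0) := by
    rw [pdt_eq ((contDiff_pdx h).differentiable (by simp)) x t]
    have : uncurry (pdx v) = fun p : ℝ × ℝ => fderiv ℝ F p (1, 0) := by
      funext p; exact pdx_eq hdF p.1 p.2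
    rw [this, fderiv_clm_apply hdD (differentiableAt_const _)]
    simp
  have e2 : pdx (pdt v) x t = (fderiv ℝ (fderiv ℝ F) (x, t) (1, 0)) (0, 1) := by
    rw [pdx_eq ((contDiff_pdt h).differentiable (by simp)) x t]
    have : uncurry (pdt v) = fun p : ℝ × ℝ => fderiv ℝ F p (0, 1) := by
      funext p; exact pdt_eq hdF p.1 p.2
    rw [this, fderiv_clm_apply hdD (differentiableAt_const _)]
    simp
  rw [e1, e2, hsymm]

lemma hasDerivAt_integral_param (F F' : ℝ → ℝ → ℝ)
    (hc : Continuous (uncurry F)) (hF' : Continuous (uncurry F'))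
    (hd : ∀ x t, HasDerivAt (fun s => F x s) (F' x t) t) (t : ℝ) :
    HasDerivAt (fun s => ∫ x in (0:ℝ)..1, F x s) (∫ x in (0:ℝ)..1, F' x t) t := by
  obtain ⟨C, hC⟩ : ∃ C, ∀ p ∈ (Icc (0:ℝ) 1 ×ˢ Icc (t-1) (t+1)), ‖uncurry F' p‖ ≤ C :=
    ((isCompact_Icc.prod isCompact_Icc)).exists_bound_of_continuousOn hF'.continuousOn
  have key := intervalIntegral.hasDerivAt_integral_of_dominated_loc_of_deriv_le
    (𝕜 := ℝ) (μ := volume) (a := (0:ℝ)) (b := 1) (s := Metric.ball t 1)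
    (F := fun s x => F x s) (F' := fun s x => F' x s) (x₀ := t)
    (bound := fun _ => C) (Metric.ball_mem_nhds t one_pos)
    (Filter.Eventually.of_forall fun s =>
      ((hc.comp (continuous_id.prodMk continuous_const)).aestronglyMeasurable))
    ((hc.comp (continuous_id.prodMk continuous_const)).intervalIntegrable 0 1)
    ((hF'.comp (continuous_id.prodMk continuous_const)).aestronglyMeasurable)
    (Filter.Eventually.of_forall fun x hx s hs => by
      have hx' : x ∈ Icc (0:ℝ) 1 := Ioc_subset_Icc_self (by simpa using hx)
      have hs' : s ∈ Icc (t-1) (t+1) := by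
        rw [Metric.mem_ball, Real.dist_eq, abs_lt] at hs
        constructor <;> linarith [hs.1, hs.2]
      exact hC (x, s) ⟨hx', hs'⟩)
    (intervalIntegrable_const)
    (Filter.Eventually.of_forall fun x _ s _ => hd x s)
  exact key.2

lemma hasDerivAt_pdt {v : ℝ → ℝ → ℝ} (h : ContDiff ℝ (⊤ : ℕ∞) (uncurry v)) (x t : ℝ) :
    HasDerivAt (fun s => v x s) (pdt v x t) t :=
  (((contDiff_slice_t h x).differentiable (by simp)) t).hasDerivAt

lemma hasDerivAt_pdx {v : ℝ → ℝ → ℝ} (h : ContDiff ℝ (⊤ : ℕ∞) (uncurry v)) (x t : ℝ) :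
    HasDerivAt (fun y => v y t) (pdx v x t) x :=
  (((contDiff_slice_x h t).differentiable (by simp)) x).hasDerivAt

end BeamAux

/-- `Φ`, the potential used in the integration by parts. -/
noncomputable def PhiF (σ q : ℝ → ℝ) (ι : ℝ) (u : ℝ → ℝ → ℝ) (t x : ℝ) : ℝ :=
  x * (pdt u x t)^2
  + 2*x*pdx u x t*(q x*pdx u x t)
  - x*q x*(pdx u x t)^2
  - 2*x*pdx u x t * pdx (fun y s => σ y * pdx (pdx u) y s) x t
  + (1+ι/4)*(2*pdx u x t*(σ x*pdx (pdx u) x t))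
  + x*σ x*(pdx (pdx u) x t)^2
  + ι/2*(u x t*(q x*pdx u x t))
  - ι/2*(u x t * pdx (fun y s => σ y * pdx (pdx u) y s) x t)

/-- `Φ'`, the derivative of `PhiF`. -/
noncomputable def PhiD (σ q : ℝ → ℝ) (ι : ℝ) (u : ℝ → ℝ → ℝ) (t x : ℝ) : ℝ :=
  ((pdt u x t)^2 + x*(2*pdt u x t*pdx (pdt u) x t))
  + ((2*pdx u x t + 2*x*pdx (pdx u) x t)*(q x*pdx u x t)
      + (2*x*pdx u x t)*(deriv q x*pdx u x t + q x*pdx (pdx u) x t))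
  - ((q x + x*deriv q x)*(pdx u x t)^2 + x*q x*(2*pdx u x t*pdx (pdx u) x t))
  - ((2*pdx u x t + 2*x*pdx (pdx u) x t)*pdx (fun y s => σ y * pdx (pdx u) y s) x t
      + 2*x*pdx u x t*pdx (pdx (fun y s => σ y * pdx (pdx u) y s)) x t)
  + (1+ι/4)*(2*pdx (pdx u) x t*(σ x*pdx (pdx u) x t)
      + 2*pdx u x t*(deriv σ x*pdx (pdx u) x t + σ x*pdx (pdx (pdx u)) x t))
  + ((σ x + x*deriv σ x)*(pdx (pdx u) x t)^2
      + x*σ x*(2*pdx (pdx u) x t*pdx (pdx (pdx u)) x t))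
  + ι/2*(pdx u x t*(q x*pdx u x t) + u x t*(deriv q x*pdx u x t + q x*pdx (pdx u) x t))
  - ι/2*(pdx u x t*pdx (fun y s => σ y * pdx (pdx u) y s) x t
      + u x t*pdx (pdx (fun y s => σ y * pdx (pdx u) y s)) x t)

/-- The residual interior term. -/
noncomputable def rhoF (σ q : ℝ → ℝ) (ι : ℝ) (u : ℝ → ℝ → ℝ) (t x : ℝ) : ℝ :=
  (ι/2-1)*(pdt u x t)^2 - (1+ι/2)*(q x*(pdx u x t)^2)
  - (3+ι/2)*(σ x*(pdx (pdx u) x t)^2)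
  + x*deriv q x*(pdx u x t)^2 + x*deriv σ x*(pdx (pdx u) x t)^2

/-- The integrand after substituting the PDE. -/
noncomputable def BigF (σ q : ℝ → ℝ) (ι : ℝ) (u : ℝ → ℝ → ℝ) (t x : ℝ) : ℝ :=
  (pdx (fun y s => q y * pdx u y s) x t
    - pdx (pdx (fun y s => σ y * pdx (pdx u) y s)) x t) * (2*x*pdx u x t + ι/2*u x t)
  + pdt u x t * (2 * x * pdx (pdt u) x t + ι / 2 * pdt u x t)

/-- Time derivative of the `G₁` integrand. -/
noncomputable def AintD (ι : ℝ) (u : ℝ → ℝ → ℝ) (x s : ℝ) : ℝ :=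
  pdt (pdt u) x s * (2 * x * pdx u x s + ι / 2 * u x s)
  + pdt u x s * (2 * x * pdt (pdx u) x s + ι / 2 * pdt u x s)

/-- Time derivative of the delay integrand. -/
noncomputable def ZintD (τ : ℝ) (u : ℝ → ℝ → ℝ) (s r : ℝ) : ℝ :=
  Real.exp (-2 * τ * s) * (2 * pdt u 1 (r - τ * s) * pdt (pdt u) 1 (r - τ * s))

private lemma beam_boundary_est (ι γ τ κ₁ κ₂ a b c d P : ℝ) (hP : 0 < P) :
    c^2 + P*a^2 - 2*a*(P*a + (κ₁*c + κ₂*d)) + ι/2*(b*(P*a)) - ι/2*(b*(P*a + (κ₁*c + κ₂*d)))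
      + γ*c^2 - γ*Real.exp (-2*τ)*d^2
      ≤ (P / 2) * a ^ 2 + (P / 4) * ι ^ 2 * b ^ 2 + (1 + γ + (2 / P) * κ₁ ^ 2) * c ^ 2
        + ((2 / P) * κ₂ ^ 2 - γ * Real.exp (-2 * τ)) * d ^ 2 := by
  have hM12 : 0 ≤ 18*P^2*a^2 + 3*P^2*ι^2*b^2 + 24*κ₁^2*c^2 + 24*κ₂^2*d^2
      + 12*P*(2*a + ι/2*b)*(κ₁*c + κ₂*d) := by
    nlinarith [sq_nonneg (3*P*a + 2*(κ₁*c + κ₂*d)), sq_nonneg (P*ι*b + (κ₁*c + κ₂*d)),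
      sq_nonneg (κ₁*c - κ₂*d), sq_nonneg (κ₁*c), sq_nonneg (κ₂*d)]
  have hstar : 0 ≤ 3/2*P*a^2 + P*ι^2/4*b^2 + 2/P*κ₁^2*c^2 + 2/P*κ₂^2*d^2
      + (2*a + ι/2*b)*(κ₁*c + κ₂*d) := by
    have heq : 3/2*P*a^2 + P*ι^2/4*b^2 + 2/P*κ₁^2*c^2 + 2/P*κ₂^2*d^2
        + (2*a + ι/2*b)*(κ₁*c + κ₂*d)
        = (18*P^2*a^2 + 3*P^2*ι^2*b^2 + 24*κ₁^2*c^2 + 24*κ₂^2*d^2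
          + 12*P*(2*a + ι/2*b)*(κ₁*c + κ₂*d)) / (12*P) := by
      field_simp
      ring
    rw [heq]
    exact div_nonneg hM12 (by positivity)
  nlinarith [hstar]

/-- Estimate for the derivative of the auxiliary functional `G` along regular solutions
of the degenerate Euler–Bernoulli beam with axial force and delayed boundary feedback. -/
theorem auxiliary_functional_derivative_estimate
    (τ κ₁ κ₂ γ : ℝ) (hτ : 0 < τ) (hκ₂ : κ₂ ≠ 0) (hκ : |κ₂| < κ₁)
    (hγ₁ : |κ₂| ≤ γ) (hγ₂ : γ ≤ 2 * κ₁ - |κ₂|)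
    (q : ℝ → ℝ) (q₀ q₁ q₂ : ℝ) (hq₀ : 0 < q₀) (hq_smooth : ContDiff ℝ 1 q)
    (hq_bound : ∀ x ∈ Set.Icc (0:ℝ) 1, q₀ ≤ q x ∧ q x ≤ q₁)
    (hq' : ∀ x ∈ Set.Icc (0:ℝ) 1, |deriv q x| ≤ q₂)
    (σ : ℝ → ℝ) (hσ_smooth : ContDiff ℝ 2 σ) (hσ0 : σ 0 = 0)
    (hσ_pos : ∀ x ∈ Set.Ioc (0:ℝ) 1, 0 < σ x)
    (ισ : ℝ) (hισ : 0 ≤ ισ)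
    (hσ_bound : ∀ x ∈ Set.Ioc (0:ℝ) 1, x * |deriv σ x| ≤ ισ * σ x)
    (ι : ℝ) (hι : ι = max ισ (q₂ / q₀)) (hι2 : ι < 2)
    (u : ℝ → ℝ → ℝ) (hu_smooth : ContDiff ℝ (⊤ : ℕ∞) (Function.uncurry u))
    (hpde : ∀ x ∈ Set.Ioo (0:ℝ) 1, ∀ t, 0 < t →
      pdt (pdt u) x t
        + pdx (pdx (fun y s => σ y * pdx (pdx u) y s)) x t
        - pdx (fun y s => q y * pdx u y s) x t = 0)
    (hbc₀ : ∀ t : ℝ, u 0 t = 0)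
    (hbc₁ : ∀ t : ℝ, pdx u 0 t = 0)
    (hbc₂ : ∀ t : ℝ, pdx (pdx u) 1 t = 0)
    (hbc₃ : ∀ t : ℝ, pdx (fun y s => σ y * pdx (pdx u) y s) 1 t - q 1 * pdx u 1 t
      = κ₁ * pdt u 1 t + κ₂ * pdt u 1 (t - τ))
    (E G : ℝ → ℝ) (hE : E = beamEnergy σ q γ τ u) (hG : G = beamG ι γ τ u) :
    ∀ t, 0 < t → ∃ g : ℝ, HasDerivAt G g t ∧
      g ≤ -(min (2 - ι) (4 * Real.exp (-2 * τ))) * E t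
        + (q 1 / 2) * (pdx u 1 t) ^ 2
        + (q 1 / 4) * ι ^ 2 * (u 1 t) ^ 2
        + (1 + γ + (2 / q 1) * κ₁ ^ 2) * (pdt u 1 t) ^ 2
        + ((2 / q 1) * κ₂ ^ 2 - γ * Real.exp (-2 * τ)) * (pdt u 1 (t - τ)) ^ 2 := by
  intro t ht
  -- basic positivity
  have hγpos : 0 < γ := lt_of_lt_of_le (abs_pos.mpr hκ₂) hγ₁
  have hq1pos : 0 < q 1 := lt_of_lt_of_le hq₀ (hq_bound 1 (by norm_num)).1
  have hq₂0 : 0 ≤ q₂ := le_trans (abs_nonneg _) (hq' 0 (by norm_num))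
  have hιnn : 0 ≤ ι := hι ▸ le_trans hισ (le_max_left _ _)
  have hισι : ισ ≤ ι := hι ▸ le_max_left _ _
  have hq2q0 : q₂ ≤ ι * q₀ := by
    have : q₂ / q₀ ≤ ι := hι ▸ le_max_right _ _
    calc q₂ = q₂ / q₀ * q₀ := by field_simp
    _ ≤ ι * q₀ := by nlinarith
  have hσnn : ∀ x ∈ Set.Icc (0:ℝ) 1, 0 ≤ σ x := by
    intro x hx
    rcases eq_or_lt_of_le hx.1 with h | h
    · rw [← h, hσ0]
    · exact (hσ_pos x ⟨h, hx.2⟩).le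
  -- smoothness bookkeeping
  have hux := BeamAux.contDiff_pdx hu_smooth
  have huxx := BeamAux.contDiff_pdx hux
  have huxxx := BeamAux.contDiff_pdx huxx
  have hut := BeamAux.contDiff_pdt hu_smooth
  have hutt := BeamAux.contDiff_pdt hut
  have hutx := BeamAux.contDiff_pdx hut
  have huxt := BeamAux.contDiff_pdt hux
  have hσ1 : ContDiff ℝ 1 σ := hσ_smooth.of_le (by norm_num)
  have hσd : ContDiff ℝ 1 (deriv σ) := by
    have h2 : ContDiff ℝ (1+1) σ := by
      have : ((1:WithTop ℕ∞)+1) = 2 := by norm_num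
      rw [this]; exact hσ_smooth
    exact (contDiff_succ_iff_deriv.mp h2).2.2
  have cσ : Continuous σ := hσ_smooth.continuous
  have cσ' : Continuous (deriv σ) := hσd.continuous
  have cq : Continuous q := hq_smooth.continuous
  have cq' : Continuous (deriv q) := hq_smooth.continuous_deriv le_rfl
  -- derivative formulas for σ·uxx and q·ux
  have hσx : ∀ y : ℝ, HasDerivAt σ (deriv σ y) y :=
    fun y => ((hσ1.differentiable one_ne_zero) y).hasDerivAt
  have hqx : ∀ y : ℝ, HasDerivAt q (deriv q y) y :=
    fun y => ((hq_smooth.differentiable one_ne_zero) y).hasDerivAt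
  have hF2slice : ∀ s y : ℝ, HasDerivAt (fun z => σ z * pdx (pdx u) z s)
      (deriv σ y * pdx (pdx u) y s + σ y * pdx (pdx (pdx u)) y s) y :=
    fun s y => (hσx y).mul (BeamAux.hasDerivAt_pdx huxx y s)
  have hSdF : ∀ y s : ℝ, pdx (fun y s => σ y * pdx (pdx u) y s) y s
      = deriv σ y * pdx (pdx u) y s + σ y * pdx (pdx (pdx u)) y s :=
    fun y s => (hF2slice s y).deriv
  have hQdF : ∀ y s : ℝ, pdx (fun y s => q y * pdx u y s) y s
      = deriv q y * pdx u y s + q y * pdx (pdx u) y s :=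
    fun y s => ((hqx y).mul (BeamAux.hasDerivAt_pdx hux y s)).deriv
  -- HasDerivAt for the (already differentiated once) σ-term
  have hSdcd : ∀ s : ℝ, ContDiff ℝ 1 (fun y => pdx (fun y s => σ y * pdx (pdx u) y s) y s) := by
    intro s
    have he : (fun y => pdx (fun y s => σ y * pdx (pdx u) y s) y s)
        = fun y => deriv σ y * pdx (pdx u) y s + σ y * pdx (pdx (pdx u)) y s :=
      funext fun y => hSdF y s
    rw [he]
    exact (hσd.mul ((BeamAux.contDiff_slice_x huxx s).of_le (by simp))).add
      (hσ1.mul ((BeamAux.contDiff_slice_x huxxx s).of_le (by simp)))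
  have hSdd : ∀ (y s : ℝ), HasDerivAt (fun z => pdx (fun y s => σ y * pdx (pdx u) y s) z s)
      (pdx (pdx (fun y s => σ y * pdx (pdx u) y s)) y s) y :=
    fun y s => ((((hSdcd s).differentiable one_ne_zero)) y).hasDerivAt
  -- continuity of x-slices at time t
  have cW : Continuous (fun x => u x t) := (BeamAux.contDiff_slice_x hu_smooth t).continuous
  have cA : Continuous (fun x => pdx u x t) := (BeamAux.contDiff_slice_x hux t).continuous
  have cB : Continuous (fun x => pdx (pdx u) x t) := (BeamAux.contDiff_slice_x huxx t).continuous
  have cC : Continuous (fun x => pdx (pdx (pdx u)) x t) :=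
    (BeamAux.contDiff_slice_x huxxx t).continuous
  have cM : Continuous (fun x => pdt u x t) := (BeamAux.contDiff_slice_x hut t).continuous
  have cN : Continuous (fun x => pdx (pdt u) x t) := (BeamAux.contDiff_slice_x hutx t).continuous
  have cSd : Continuous (fun x => pdx (fun y s => σ y * pdx (pdx u) y s) x t) :=
    (hSdcd t).continuous
  have cSdd : Continuous (fun x => pdx (pdx (fun y s => σ y * pdx (pdx u) y s)) x t) :=
    (hSdcd t).continuous_deriv le_rfl
  have cQd : Continuous (fun x => pdx (fun y s => q y * pdx u y s) x t) := by
    have he : (fun x => pdx (fun y s => q y * pdx u y s) x t)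
        = fun x => deriv q x * pdx u x t + q x * pdx (pdx u) x t := funext fun y => hQdF y t
    rw [he]; exact (cq'.mul cA).add (cq.mul cB)
  -- uncurried continuity
  have c1 : Continuous (fun p : ℝ × ℝ => u p.1 p.2) := hu_smooth.continuous
  have c2 : Continuous (fun p : ℝ × ℝ => pdx u p.1 p.2) := hux.continuous
  have c3 : Continuous (fun p : ℝ × ℝ => pdt u p.1 p.2) := hut.continuous
  have c4 : Continuous (fun p : ℝ × ℝ => pdt (pdt u) p.1 p.2) := hutt.continuous
  have c5 : Continuous (fun p : ℝ × ℝ => pdt (pdx u) p.1 p.2) := huxt.continuous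
  -- derivative of the first integral
  have hG1 : HasDerivAt
      (fun r => ∫ x in (0:ℝ)..1, pdt u x r * (2 * x * pdx u x r + ι / 2 * u x r))
      (∫ x in (0:ℝ)..1, AintD ι u x t) t := by
    apply BeamAux.hasDerivAt_integral_param
      (fun x s => pdt u x s * (2 * x * pdx u x s + ι / 2 * u x s)) (AintD ι u)
    · exact c3.mul (((continuous_const.mul continuous_fst).mul c2).add
        (continuous_const.mul c1))
    · exact (c4.mul (((continuous_const.mul continuous_fst).mul c2).add
        (continuous_const.mul c1))).add
        (c3.mul (((continuous_const.mul continuous_fst).mul c5).add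
          (continuous_const.mul c3)))
    · intro x s
      exact (BeamAux.hasDerivAt_pdt hut x s).mul
        (((BeamAux.hasDerivAt_pdt hux x s).const_mul (2*x)).add
          ((BeamAux.hasDerivAt_pdt hu_smooth x s).const_mul (ι/2)))
  -- derivative of the delay integral
  have cz2 : Continuous (fun p : ℝ × ℝ => pdt u 1 (p.2 - τ * p.1)) :=
    (BeamAux.contDiff_slice_t hut 1).continuous.comp
      (continuous_snd.sub (continuous_const.mul continuous_fst))
  have cz3 : Continuous (fun p : ℝ × ℝ => pdt (pdt u) 1 (p.2 - τ * p.1)) :=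
    (BeamAux.contDiff_slice_t hutt 1).continuous.comp
      (continuous_snd.sub (continuous_const.mul continuous_fst))
  have hG2 : HasDerivAt
      (fun r => ∫ s in (0:ℝ)..1, Real.exp (-2 * τ * s) * pdt u 1 (r - τ * s) ^ 2)
      (∫ s in (0:ℝ)..1, ZintD τ u s t) t := by
    apply BeamAux.hasDerivAt_integral_param
      (fun s r => Real.exp (-2 * τ * s) * pdt u 1 (r - τ * s) ^ 2) (ZintD τ u)
    · exact (Real.continuous_exp.comp (continuous_const.mul continuous_fst)).mul (cz2.pow 2)
    · exact (Real.continuous_exp.comp (continuous_const.mul continuous_fst)).mul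
        ((continuous_const.mul cz2).mul cz3)
    · intro s r
      have h1 : HasDerivAt (fun r' : ℝ => r' - τ * s) 1 r := (hasDerivAt_id r).sub_const (τ * s)
      have h2 : HasDerivAt (fun r' : ℝ => pdt u 1 (r' - τ * s))
          (pdt (pdt u) 1 (r - τ * s) * 1) r :=
        HasDerivAt.comp r (BeamAux.hasDerivAt_pdt hut 1 (r - τ * s)) h1
      have h3 := (h2.pow 2).const_mul (Real.exp (-2 * τ * s))
      refine h3.congr_deriv ?_
      simp [ZintD]
  -- derivative of G
  have hGd : HasDerivAt G
      ((∫ x in (0:ℝ)..1, AintD ι u x t) + γ * τ * ∫ s in (0:ℝ)..1, ZintD τ u s t) t := by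
    rw [hG]
    have hbeq : beamG ι γ τ u = fun r =>
        (∫ x in (0:ℝ)..1, pdt u x r * (2 * x * pdx u x r + ι / 2 * u x r))
        + γ * τ * ∫ s in (0:ℝ)..1, Real.exp (-2 * τ * s) * pdt u 1 (r - τ * s) ^ 2 := rfl
    rw [hbeq]
    exact hG1.add (hG2.const_mul (γ * τ))
  refine ⟨_, hGd, ?_⟩
  -- Φ has derivative ΦD
  have hPhi : ∀ x : ℝ, HasDerivAt (fun y => PhiF σ q ι u t y) (PhiD σ q ι u t x) x := by
    intro x
    have hWu := BeamAux.hasDerivAt_pdx hu_smooth x t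
    have hP1 := BeamAux.hasDerivAt_pdx hux x t
    have hP2 := BeamAux.hasDerivAt_pdx huxx x t
    have hMx := BeamAux.hasDerivAt_pdx hut x t
    have hSx := hSdd x t
    have h1 := (hasDerivAt_id x).mul (hMx.pow 2)
    have h2 := (((hasDerivAt_id x).const_mul 2).mul hP1).mul ((hqx x).mul hP1)
    have h3 := ((hasDerivAt_id x).mul (hqx x)).mul (hP1.pow 2)
    have h4 := ((((hasDerivAt_id x).const_mul 2).mul hP1).mul hSx)
    have h5 := ((hP1.const_mul 2).mul ((hσx x).mul hP2)).const_mul (1+ι/4)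
    have h6 := ((hasDerivAt_id x).mul (hσx x)).mul (hP2.pow 2)
    have h7 := (hWu.mul ((hqx x).mul hP1)).const_mul (ι/2)
    have h8 := (hWu.mul hSx).const_mul (ι/2)
    have H := ((((((h1.add h2).sub h3).sub h4).add h5).add h6).add h7).sub h8
    refine H.congr_deriv ?_
    simp only [PhiD, id_eq]
    norm_num
    try ring
  have cPhiD : Continuous (fun x => PhiD σ q ι u t x) := by
    have t1 : Continuous (fun x => (pdt u x t)^2 + x*(2*pdt u x t*pdx (pdt u) x t)) :=
      (cM.pow 2).add (continuous_id.mul ((continuous_const.mul cM).mul cN))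
    have t2 : Continuous (fun x => (2*pdx u x t + 2*x*pdx (pdx u) x t)*(q x*pdx u x t)
        + (2*x*pdx u x t)*(deriv q x*pdx u x t + q x*pdx (pdx u) x t)) :=
      (((continuous_const.mul cA).add
        ((continuous_const.mul continuous_id).mul cB)).mul (cq.mul cA)).add
      ((((continuous_const.mul continuous_id).mul cA)).mul ((cq'.mul cA).add (cq.mul cB)))
    have t3 : Continuous (fun x => (q x + x*deriv q x)*(pdx u x t)^2
        + x*q x*(2*pdx u x t*pdx (pdx u) x t)) :=
      ((cq.add (continuous_id.mul cq')).mul (cA.pow 2)).add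
      ((continuous_id.mul cq).mul ((continuous_const.mul cA).mul cB))
    have t4 : Continuous (fun x =>
        (2*pdx u x t + 2*x*pdx (pdx u) x t)*pdx (fun y s => σ y * pdx (pdx u) y s) x t
        + 2*x*pdx u x t*pdx (pdx (fun y s => σ y * pdx (pdx u) y s)) x t) :=
      (((continuous_const.mul cA).add
        ((continuous_const.mul continuous_id).mul cB)).mul cSd).add
      ((((continuous_const.mul continuous_id).mul cA)).mul cSdd)
    have t5 : Continuous (fun x => (1+ι/4)*(2*pdx (pdx u) x t*(σ x*pdx (pdx u) x t)
        + 2*pdx u x t*(deriv σ x*pdx (pdx u) x t + σ x*pdx (pdx (pdx u)) x t))) :=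
      continuous_const.mul (((continuous_const.mul cB).mul (cσ.mul cB)).add
      ((continuous_const.mul cA).mul ((cσ'.mul cB).add (cσ.mul cC))))
    have t6 : Continuous (fun x => (σ x + x*deriv σ x)*(pdx (pdx u) x t)^2
        + x*σ x*(2*pdx (pdx u) x t*pdx (pdx (pdx u)) x t)) :=
      ((cσ.add (continuous_id.mul cσ')).mul (cB.pow 2)).add
      ((continuous_id.mul cσ).mul ((continuous_const.mul cB).mul cC))
    have t7 : Continuous (fun x => ι/2*(pdx u x t*(q x*pdx u x t)
        + u x t*(deriv q x*pdx u x t + q x*pdx (pdx u) x t))) :=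
      continuous_const.mul ((cA.mul (cq.mul cA)).add
      (cW.mul ((cq'.mul cA).add (cq.mul cB))))
    have t8 : Continuous (fun x => ι/2*(pdx u x t*pdx (fun y s => σ y * pdx (pdx u) y s) x t
        + u x t*pdx (pdx (fun y s => σ y * pdx (pdx u) y s)) x t)) :=
      continuous_const.mul ((cA.mul cSd).add (cW.mul cSdd))
    exact ((((((t1.add t2).sub t3).sub t4).add t5).add t6).add t7).sub t8
  have crho : Continuous (fun x => rhoF σ q ι u t x) := by
    have t1 : Continuous (fun x => (ι/2-1)*(pdt u x t)^2) := continuous_const.mul (cM.pow 2)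
    have t2 : Continuous (fun x => (1+ι/2)*(q x*(pdx u x t)^2)) :=
      continuous_const.mul (cq.mul (cA.pow 2))
    have t3 : Continuous (fun x => (3+ι/2)*(σ x*(pdx (pdx u) x t)^2)) :=
      continuous_const.mul (cσ.mul (cB.pow 2))
    have t4 : Continuous (fun x => x*deriv q x*(pdx u x t)^2) :=
      (continuous_id.mul cq').mul (cA.pow 2)
    have t5 : Continuous (fun x => x*deriv σ x*(pdx (pdx u) x t)^2) :=
      (continuous_id.mul cσ').mul (cB.pow 2)
    exact (((t1.sub t2).sub t3).add t4).add t5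
  have ce : Continuous (fun x =>
      (pdt u x t) ^ 2 + σ x * (pdx (pdx u) x t) ^ 2 + q x * (pdx u x t) ^ 2) :=
    ((cM.pow 2).add (cσ.mul (cB.pow 2))).add (cq.mul (cA.pow 2))
  have hPhiInt : (∫ x in (0:ℝ)..1, PhiD σ q ι u t x)
      = PhiF σ q ι u t 1 - PhiF σ q ι u t 0 :=
    integral_eq_sub_of_hasDerivAt (fun x _ => hPhi x) (cPhiD.intervalIntegrable 0 1)
  -- PDE substitution a.e.
  have hae1 : (∫ x in (0:ℝ)..1, AintD ι u x t) = ∫ x in (0:ℝ)..1, BigF σ q ι u t x := by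
    apply intervalIntegral.integral_congr_ae
    have h1 : ∀ᵐ x : ℝ, x ∉ ({(1:ℝ)} : Set ℝ) :=
      MeasureTheory.measure_eq_zero_iff_ae_notMem.mp (MeasureTheory.measure_singleton 1)
    filter_upwards [h1] with x hx1 hxI
    rw [Set.uIoc_of_le (by norm_num : (0:ℝ) ≤ 1)] at hxI
    have hxo : x ∈ Set.Ioo (0:ℝ) 1 := ⟨hxI.1, lt_of_le_of_ne hxI.2 (by simpa using hx1)⟩
    have hp := hpde x hxo t ht
    have hcl : pdt (pdx u) x t = pdx (pdt u) x t := BeamAux.clairaut hu_smooth x t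
    have hsub : pdt (pdt u) x t = pdx (fun y s => q y * pdx u y s) x t
        - pdx (pdx (fun y s => σ y * pdx (pdx u) y s)) x t := by linarith
    simp only [AintD, BigF, hcl, hsub]
    try ring
  -- pointwise decomposition
  have hBigPhi : ∀ x : ℝ, BigF σ q ι u t x = PhiD σ q ι u t x + rhoF σ q ι u t x := by
    intro x
    simp only [BigF, PhiD, rhoF, hQdF x t, hSdF x t]
    ring
  have hIA : (∫ x in (0:ℝ)..1, AintD ι u x t)
      = PhiF σ q ι u t 1 - PhiF σ q ι u t 0 + ∫ x in (0:ℝ)..1, rhoF σ q ι u t x := by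
    rw [hae1, intervalIntegral.integral_congr (fun x _ => hBigPhi x),
      intervalIntegral.integral_add (cPhiD.intervalIntegrable 0 1)
        (crho.intervalIntegrable 0 1), hPhiInt]
  have hPhi0 : PhiF σ q ι u t 0 = 0 := by
    simp [PhiF, hbc₀ t, hbc₁ t]
  -- interior bound
  have hrho : (∫ x in (0:ℝ)..1, rhoF σ q ι u t x)
      ≤ (ι/2-1) * ∫ x in (0:ℝ)..1,
        ((pdt u x t) ^ 2 + σ x * (pdx (pdx u) x t) ^ 2 + q x * (pdx u x t) ^ 2) := by
    rw [← intervalIntegral.integral_const_mul]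
    apply intervalIntegral.integral_mono_on (by norm_num)
      (crho.intervalIntegrable 0 1) ((continuous_const.mul ce).intervalIntegrable 0 1)
    intro x hx
    have hq'x := hq' x hx
    have hqlo := (hq_bound x hx).1
    have hσx0 := hσnn x hx
    have hxq : x * deriv q x * (pdx u x t)^2 ≤ ι * (q x * (pdx u x t)^2) := by
      have h1 : x * deriv q x ≤ ι * q x := by
        have h2 : x * deriv q x ≤ |deriv q x| := by
          rcases le_or_gt (deriv q x) 0 with h|h
          · calc x * deriv q x ≤ 0 := mul_nonpos_of_nonneg_of_nonpos hx.1 h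
              _ ≤ |deriv q x| := abs_nonneg _
          · calc x * deriv q x ≤ 1 * deriv q x := by nlinarith [hx.2]
              _ ≤ |deriv q x| := by rw [one_mul]; exact le_abs_self _
        calc x * deriv q x ≤ q₂ := le_trans h2 hq'x
          _ ≤ ι * q₀ := hq2q0
          _ ≤ ι * q x := by nlinarith
      nlinarith [sq_nonneg (pdx u x t)]
    have hxσ : x * deriv σ x * (pdx (pdx u) x t)^2 ≤ ι * (σ x * (pdx (pdx u) x t)^2) := by
      rcases eq_or_lt_of_le hx.1 with h|h
      · rw [← h]; simp [hσ0]
      · have hb := hσ_bound x ⟨h, hx.2⟩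
        have h1 : x * deriv σ x ≤ ι * σ x := by
          have h2 : x * deriv σ x ≤ x * |deriv σ x| := by
            have := le_abs_self (deriv σ x)
            nlinarith
          nlinarith [hσ_pos x ⟨h, hx.2⟩]
        nlinarith [sq_nonneg (pdx (pdx u) x t)]
    simp only [rhoF, Pi.mul_apply]
    nlinarith [mul_nonneg hσx0 (sq_nonneg (pdx (pdx u) x t))]
  have hIE0 : 0 ≤ ∫ x in (0:ℝ)..1,
      ((pdt u x t) ^ 2 + σ x * (pdx (pdx u) x t) ^ 2 + q x * (pdx u x t) ^ 2) := by
    apply intervalIntegral.integral_nonneg (by norm_num)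
    intro x hx
    have := hσnn x hx
    have := (hq_bound x hx).1
    nlinarith [sq_nonneg (pdt u x t), sq_nonneg (pdx (pdx u) x t), sq_nonneg (pdx u x t)]
  -- delay side
  have czz : Continuous (fun s => pdt u 1 (t - τ*s)) :=
    (BeamAux.contDiff_slice_t hut 1).continuous.comp
      (continuous_const.sub (continuous_const.mul continuous_id))
  have czzA : Continuous (fun s => pdt (pdt u) 1 (t - τ*s)) :=
    (BeamAux.contDiff_slice_t hutt 1).continuous.comp
      (continuous_const.sub (continuous_const.mul continuous_id))
  have cexp : Continuous (fun s : ℝ => Real.exp (-2*τ*s)) :=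
    Real.continuous_exp.comp (continuous_const.mul continuous_id)
  have czt : Continuous (fun s => Real.exp (-2*τ*s) * pdt u 1 (t - τ*s)^2) :=
    cexp.mul (czz.pow 2)
  have czd : Continuous (fun s => ZintD τ u s t) :=
    cexp.mul ((continuous_const.mul czz).mul czzA)
  have hψ : ∀ s : ℝ, HasDerivAt (fun s' => Real.exp (-2*τ*s') * pdt u 1 (t - τ*s')^2)
      ((-2*τ)*(Real.exp (-2*τ*s) * pdt u 1 (t - τ*s)^2) + (-τ)*ZintD τ u s t) s := by
    intro s
    have h0 : HasDerivAt (fun s' : ℝ => -2*τ*s') (-2*τ) s := by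
      simpa using (hasDerivAt_id s).const_mul (-2*τ)
    have he : HasDerivAt (fun s' : ℝ => Real.exp (-2*τ*s')) (Real.exp (-2*τ*s) * (-2*τ)) s :=
      (Real.hasDerivAt_exp _).comp s h0
    have h1 : HasDerivAt (fun s' : ℝ => t - τ*s') (-τ) s := by
      simpa using ((hasDerivAt_id s).const_mul τ).const_sub t
    have h2 : HasDerivAt (fun s' : ℝ => pdt u 1 (t - τ*s'))
        (pdt (pdt u) 1 (t - τ*s) * (-τ)) s :=
      HasDerivAt.comp s (BeamAux.hasDerivAt_pdt hut 1 (t - τ*s)) h1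
    have h3 := he.mul (h2.pow 2)
    refine h3.congr_deriv ?_
    simp only [ZintD, Pi.pow_apply]
    push_cast
    ring
  have hψInt : (∫ s in (0:ℝ)..1,
      ((-2*τ)*(Real.exp (-2*τ*s) * pdt u 1 (t - τ*s)^2) + (-τ)*ZintD τ u s t))
      = Real.exp (-2*τ*1) * pdt u 1 (t - τ*1)^2
        - Real.exp (-2*τ*0) * pdt u 1 (t - τ*0)^2 :=
    integral_eq_sub_of_hasDerivAt (fun s _ => hψ s)
      (((continuous_const.mul czt).add (continuous_const.mul czd)).intervalIntegrable 0 1)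
  have hend : Real.exp (-2*τ*1) * pdt u 1 (t - τ*1)^2
      - Real.exp (-2*τ*0) * pdt u 1 (t - τ*0)^2
      = Real.exp (-2*τ) * pdt u 1 (t - τ)^2 - pdt u 1 t ^ 2 := by
    norm_num
  have hsplit2 : (∫ s in (0:ℝ)..1,
      ((-2*τ)*(Real.exp (-2*τ*s) * pdt u 1 (t - τ*s)^2) + (-τ)*ZintD τ u s t))
      = (-2*τ)*(∫ s in (0:ℝ)..1, Real.exp (-2*τ*s) * pdt u 1 (t - τ*s)^2)
        + (-τ)*(∫ s in (0:ℝ)..1, ZintD τ u s t) := by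
    rw [intervalIntegral.integral_add (f := fun s => (-2*τ)*(Real.exp (-2*τ*s) * pdt u 1 (t - τ*s)^2))
      (g := fun s => (-τ)*ZintD τ u s t) ((continuous_const.mul czt).intervalIntegrable 0 1)
      ((continuous_const.mul czd).intervalIntegrable 0 1),
      intervalIntegral.integral_const_mul, intervalIntegral.integral_const_mul]
  have hIZD : γ*τ*(∫ s in (0:ℝ)..1, ZintD τ u s t)
      = -γ*(Real.exp (-2*τ) * pdt u 1 (t - τ)^2 - pdt u 1 t ^ 2)
        - 2*γ*τ*(∫ s in (0:ℝ)..1, Real.exp (-2*τ*s) * pdt u 1 (t - τ*s)^2) := by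
    have h := hsplit2.symm.trans (hψInt.trans hend)
    linear_combination (-γ) * h
  have hIZlow : Real.exp (-2*τ) * (∫ s in (0:ℝ)..1, (pdt u 1 (t - τ*s))^2)
      ≤ ∫ s in (0:ℝ)..1, Real.exp (-2*τ*s) * pdt u 1 (t - τ*s)^2 := by
    rw [← intervalIntegral.integral_const_mul]
    apply intervalIntegral.integral_mono_on (by norm_num)
      ((continuous_const.mul (czz.pow 2)).intervalIntegrable 0 1)
      (czt.intervalIntegrable 0 1)
    intro s hs
    have hle : Real.exp (-2*τ) ≤ Real.exp (-2*τ*s) := by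
      apply Real.exp_le_exp.mpr
      nlinarith [hs.1, hs.2]
    simp only [Pi.mul_apply, Pi.pow_apply]
    nlinarith [sq_nonneg (pdt u 1 (t - τ*s))]
  have hIZ2nn : 0 ≤ ∫ s in (0:ℝ)..1, (pdt u 1 (t - τ*s))^2 :=
    intervalIntegral.integral_nonneg (by norm_num) (fun s _ => sq_nonneg _)
  -- boundary terms
  have hSd1 : pdx (fun y s => σ y * pdx (pdx u) y s) 1 t
      = q 1 * pdx u 1 t + (κ₁ * pdt u 1 t + κ₂ * pdt u 1 (t - τ)) := by
    have := hbc₃ t; linarith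
  have hPhi1 : PhiF σ q ι u t 1
      = (pdt u 1 t)^2 + q 1*(pdx u 1 t)^2
        - 2*pdx u 1 t*(q 1 * pdx u 1 t + (κ₁ * pdt u 1 t + κ₂ * pdt u 1 (t - τ)))
        + ι/2*(u 1 t*(q 1*pdx u 1 t))
        - ι/2*(u 1 t*(q 1 * pdx u 1 t + (κ₁ * pdt u 1 t + κ₂ * pdt u 1 (t - τ)))) := by
    simp [PhiF, hbc₂ t, hSd1]
    try ring
  have hbdry : PhiF σ q ι u t 1 + γ*(pdt u 1 t)^2
      - γ*Real.exp (-2*τ)*(pdt u 1 (t - τ))^2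
      ≤ (q 1 / 2) * (pdx u 1 t) ^ 2 + (q 1 / 4) * ι ^ 2 * (u 1 t) ^ 2
        + (1 + γ + (2 / q 1) * κ₁ ^ 2) * (pdt u 1 t) ^ 2
        + ((2 / q 1) * κ₂ ^ 2 - γ * Real.exp (-2 * τ)) * (pdt u 1 (t - τ)) ^ 2 := by
    rw [hPhi1]
    exact beam_boundary_est ι γ τ κ₁ κ₂ (pdx u 1 t) (u 1 t) (pdt u 1 t) (pdt u 1 (t - τ))
      (q 1) hq1pos
  -- energy value
  have hEt : E t = 1 / 2 * ((∫ x in (0:ℝ)..1,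
      ((pdt u x t) ^ 2 + σ x * (pdx (pdx u) x t) ^ 2 + q x * (pdx u x t) ^ 2))
      + γ * τ * ∫ s in (0:ℝ)..1, (pdt u 1 (t - τ * s)) ^ 2) := by
    rw [hE]
    rfl
  -- min facts and final assembly
  set IE := ∫ x in (0:ℝ)..1,
      ((pdt u x t) ^ 2 + σ x * (pdx (pdx u) x t) ^ 2 + q x * (pdx u x t) ^ 2) with hIEdef
  set IZ2 := ∫ s in (0:ℝ)..1, (pdt u 1 (t - τ * s)) ^ 2 with hIZ2def
  set m := min (2 - ι) (4 * Real.exp (-2 * τ)) with hmdef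
  have hm1 : m ≤ 2 - ι := min_le_left _ _
  have hm2 : m ≤ 4 * Real.exp (-2*τ) := min_le_right _ _
  have h5 : (ι/2-1) * IE ≤ -(m/2) * IE := by
    have h := mul_le_mul_of_nonneg_right hm1 hIE0
    linarith only [h]
  have h6 : -(2*γ*τ)*(Real.exp (-2*τ) * IZ2) ≤ -(m/2)*(γ*τ*IZ2) := by
    have h := mul_le_mul_of_nonneg_left (mul_le_mul_of_nonneg_right hm2 hIZ2nn)
      (le_of_lt (mul_pos hγpos hτ))
    nlinarith only [h]
  have h7 : -(2*γ*τ)*(∫ s in (0:ℝ)..1, Real.exp (-2*τ*s) * pdt u 1 (t - τ*s)^2)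
      ≤ -(2*γ*τ)*(Real.exp (-2*τ) * IZ2) := by
    have h := mul_le_mul_of_nonneg_left hIZlow
      (by positivity : (0:ℝ) ≤ 2*γ*τ)
    linarith only [h]
  have hET2 : -m * E t = -(m/2) * IE - (m/2)*(γ*τ*IZ2) := by
    rw [hEt]; ring
  linarith only [hIA, hrho, hIZD, hbdry, hET2, h5, h6, h7, hPhi0]
end
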